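/- Let β > 0 and μ > −1. For every real s, each complex root λ of the quadratic λ² + βλ + (s² + 1 + μ)(s² + 4) = 0 satisfies Re λ ≤ (−β + Re √(β² − 16(1+μ)))/2 < 0, where the square root is the principal complex square root. -/

import Mathlib

/-!
For a quadratic `z² + b z + c` with real coefficients, either the root `z` is real and
`2 z + b = ±√(b² - 4c)`, or it is non-real and `2 Re z + b = 0`; in both cases
`2 Re z + b ≤ √(b² - 4c)`. The constant term `(s² + 1 + μ)(s² + 4)` is smallest at `s = 0`,
where it equals `4(1 + μ) > 0`, so the discriminant is at most `β² - 16(1 + μ) < β²`.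
-/

open Complex

theorem Complex.re_ofReal_cpow_two_inv (x : ℝ) : ((x : ℂ) ^ (2 : ℂ)⁻¹).re = √x := by
  rw [Real.sqrt_eq_rpow, Real.rpow_def]
  norm_num

theorem two_mul_re_add_le_sqrt_discrim {b c : ℝ} {z : ℂ} (h : z ^ 2 + b * z + c = 0) :
    2 * z.re + b ≤ √(b ^ 2 - 4 * c) := by
  have hre : (2 * z.re + b) ^ 2 - 4 * z.im ^ 2 = b ^ 2 - 4 * c := by
    have := congrArg re h
    simp only [add_re, sq, mul_re, ofReal_re, ofReal_im, zero_re] at this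
    linear_combination 4 * this
  have him : (2 * z.re + b) * z.im = 0 := by
    have := congrArg im h
    simp only [add_im, sq, mul_im, ofReal_re, ofReal_im, zero_im] at this
    linear_combination this
  rcases mul_eq_zero.mp him with hz | hz
  · rw [hz]
    exact Real.sqrt_nonneg _
  · refine (le_abs_self _).trans (Real.abs_le_sqrt ?_)
    rw [← hre, hz]
    simp

theorem four_mul_le_sq_add_mul_sq_add {m : ℝ} (hm : 0 ≤ m) (s : ℝ) :
    4 * m ≤ (s ^ 2 + m) * (s ^ 2 + 4) := by
  nlinarith [sq_nonneg s]

/-- Essential spectrum bound: for β > 0, μ > −1 and any s ∈ ℝ, each complex root λ of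
λ² + βλ + (s²+1+μ)(s²+4) = 0 satisfies
Re λ ≤ (−β + Re √(β² − 16(1+μ)))/2 < 0 (principal complex square root). -/
theorem essential_spectrum_bound (β μ : ℝ) (hβ : 0 < β) (hμ : -1 < μ) (s : ℝ)
    (lam : ℂ)
    (hroot : lam ^ 2 + (β : ℂ) * lam + (((s ^ 2 + 1 + μ) * (s ^ 2 + 4) : ℝ) : ℂ) = 0) :
    lam.re ≤ (-β + ((((β ^ 2 - 16 * (1 + μ) : ℝ)) : ℂ) ^ ((2 : ℂ)⁻¹)).re) / 2 ∧
      (-β + ((((β ^ 2 - 16 * (1 + μ) : ℝ)) : ℂ) ^ ((2 : ℂ)⁻¹)).re) / 2 < 0 := by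
  rw [Complex.re_ofReal_cpow_two_inv]
  have hlam := two_mul_re_add_le_sqrt_discrim hroot
  have hc : 4 * (1 + μ) ≤ (s ^ 2 + 1 + μ) * (s ^ 2 + 4) := by
    simpa only [add_assoc] using four_mul_le_sq_add_mul_sq_add (by linarith : 0 ≤ 1 + μ) s
  have hmono : √(β ^ 2 - 4 * ((s ^ 2 + 1 + μ) * (s ^ 2 + 4))) ≤ √(β ^ 2 - 16 * (1 + μ)) :=
    Real.sqrt_le_sqrt (by linarith)
  have hlt : √(β ^ 2 - 16 * (1 + μ)) < β := (Real.sqrt_lt' hβ).mpr (by linarith)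
  constructor <;> linarith
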